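/- arXiv:2207.05211 — 2 statements merged into one kernel-verified Lean document; each statement's English description precedes it below -/
import Mathlib

section
/- Let m ≥ 3, ω = exp(2πi/2^m), and T_m = {±(2i+1) mod 2^m : 0 ≤ i ≤ 2^{m-3}-1}. If a = 2r is even with 0 ≤ r < 2^{m-1}, then ∑_{t∈T_m} ω^{a·t} equals 2^{m-2} if r = 0, equals -2^{m-2} if r = 2^{m-2}, and equals 0 otherwise. In particular this sum is rational. -/
/-! With `ζ = ω ^ (2r)`, the term of `-t` is the inverse of the term of `t`, and since
`ζ ^ (2 ^ (m - 1)) = 1` that inverse is `ζ ^ (2 ^ (m - 1) - t)`. Hence the odd residues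
`t < 2 ^ (m - 2)` together with their negatives contribute `ζ ^ j` for every odd
`j < 2 ^ (m - 1)` exactly once, i.e. `ζ` times a geometric sum in `ζ ^ 2`. Now `ζ ^ 2` is a
`2 ^ (m - 2)`-th root of unity, equal to `1` exactly when `r ∈ {0, 2 ^ (m - 2)}`, where `ζ = ±1`;
otherwise the geometric sum vanishes. -/

open Complex

/-- The connection set `T_m = {±(2i+1) mod 2^m : 0 ≤ i < 2^(m-3)}` in `ℤ/2^m`. -/
def Tset (m : ℕ) : Finset (ZMod (2 ^ m)) :=
  (Finset.range (2 ^ (m - 3))).image (fun i => ((2 * i + 1 : ℕ) : ZMod (2 ^ m))) ∪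
    (Finset.range (2 ^ (m - 3))).image (fun i => -((2 * i + 1 : ℕ) : ZMod (2 ^ m)))

open Finset

section PowVal

variable {M : Type*} {ω : M} {n : ℕ}

theorem pow_val_natCast_of_pow_eq_one [Monoid M] (h : ω ^ n = 1) (k : ℕ) :
    ω ^ (k : ZMod n).val = ω ^ k := by
  rw [ZMod.val_natCast, ← pow_eq_pow_mod k h]

theorem pow_val_neg_of_pow_eq_one [DivisionMonoid M] [NeZero n] (h : ω ^ n = 1) (x : ZMod n) :
    ω ^ (-x).val = (ω ^ x.val)⁻¹ := by
  refine eq_inv_of_mul_eq_one_left ?_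
  rw [ZMod.neg_val]
  split_ifs with hx
  · simp [hx]
  · rw [← pow_add, Nat.sub_add_cancel x.val_lt.le, h]

end PowVal

theorem sum_Tset {M : Type*} [AddCommMonoid M] {m : ℕ} (hm : 3 ≤ m) (f : ZMod (2 ^ m) → M) :
    ∑ t ∈ Tset m, f t =
      ∑ i ∈ range (2 ^ (m - 3)), (f (2 * i + 1 : ℕ) + f (-(2 * i + 1 : ℕ))) := by
  have hpow : 2 ^ m = 8 * 2 ^ (m - 3) := by
    rw [← Nat.sub_add_cancel hm, pow_add, Nat.add_sub_cancel]; ring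
  have hlt : ∀ i ∈ range (2 ^ (m - 3)), 2 * i + 1 < 2 ^ m := by
    intro i hi
    rw [mem_range] at hi
    omega
  have hinj : Set.InjOn (fun i : ℕ => ((2 * i + 1 : ℕ) : ZMod (2 ^ m))) (range (2 ^ (m - 3))) := by
    intro i hi j hj hij
    have := congrArg ZMod.val hij
    simp only [ZMod.val_cast_of_lt (hlt i hi), ZMod.val_cast_of_lt (hlt j hj)] at this
    omega
  have hdisj : Disjoint ((range (2 ^ (m - 3))).image (fun i => ((2 * i + 1 : ℕ) : ZMod (2 ^ m))))
      ((range (2 ^ (m - 3))).image (fun i => -((2 * i + 1 : ℕ) : ZMod (2 ^ m)))) := by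
    simp only [disjoint_left, mem_image, mem_range]
    rintro _ ⟨i, hi, rfl⟩ ⟨j, hj, hji⟩
    have hdvd : 2 ^ m ∣ (2 * i + 1) + (2 * j + 1) := by
      rw [← ZMod.natCast_eq_zero_iff, Nat.cast_add, ← hji, neg_add_cancel]
    have := Nat.le_of_dvd (by omega) hdvd
    omega
  rw [Tset, sum_union hdisj, sum_image hinj,
    sum_image fun i hi j hj h => hinj hi hj (neg_injective h), sum_add_distrib]

theorem sum_odd_pow_add_inv {K : Type*} [DivisionRing K] {ζ : K} {n : ℕ} (h : ζ ^ (4 * n) = 1) :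
    ∑ i ∈ range n, (ζ ^ (2 * i + 1) + (ζ ^ (2 * i + 1))⁻¹) =
      ζ * ∑ i ∈ range (2 * n), (ζ ^ 2) ^ i := by
  have hinv : ∀ i ∈ range n, (ζ ^ (2 * i + 1))⁻¹ = ζ ^ (2 * (n + (n - 1 - i)) + 1) := by
    intro i hi
    rw [mem_range] at hi
    refine inv_eq_of_mul_eq_one_right ?_
    rw [← pow_add, show 2 * i + 1 + (2 * (n + (n - 1 - i)) + 1) = 4 * n by omega, h]
  calc ∑ i ∈ range n, (ζ ^ (2 * i + 1) + (ζ ^ (2 * i + 1))⁻¹)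
      = ∑ i ∈ range n, ζ ^ (2 * i + 1) + ∑ i ∈ range n, ζ ^ (2 * (n + i) + 1) := by
        rw [sum_add_distrib, sum_congr rfl hinv, sum_range_reflect (fun i => ζ ^ (2 * (n + i) + 1))]
    _ = ∑ i ∈ range (2 * n), ζ ^ (2 * i + 1) := by
        rw [← sum_range_add (fun i => ζ ^ (2 * i + 1)), ← two_mul]
    _ = ζ * ∑ i ∈ range (2 * n), (ζ ^ 2) ^ i := by
        simp only [mul_sum, ← pow_mul, ← pow_succ']

theorem geom_sum_eq_zero_of_pow_eq_one {K : Type*} [DivisionRing K] {ξ : K} {n : ℕ}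
    (h : ξ ^ n = 1) (h1 : ξ ≠ 1) : ∑ i ∈ range n, ξ ^ i = 0 := by
  rw [geom_sum_eq h1, h, sub_self, zero_div]

namespace IsPrimitiveRoot

variable {K : Type*} [Field K] {ω : K} {n r : ℕ}

theorem sq_pow_two_mul_eq_one_iff (hω : IsPrimitiveRoot ω (4 * n)) (hr : r < 2 * n) :
    (ω ^ (2 * r)) ^ 2 = 1 ↔ r = 0 ∨ r = n := by
  rw [← pow_mul, hω.pow_eq_one_iff_dvd, show 2 * r * 2 = 4 * r by ring,
    Nat.mul_dvd_mul_iff_left (by norm_num)]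
  constructor
  · rintro ⟨c, rfl⟩
    have hc : c < 2 := Nat.lt_of_mul_lt_mul_left (a := n) (by linarith)
    interval_cases c <;> simp
  · rintro (rfl | rfl) <;> simp

theorem pow_two_mul_half_eq_neg_one (hω : IsPrimitiveRoot ω (4 * n)) (hn : n ≠ 0) :
    ω ^ (2 * n) = -1 :=
  (hω.pow (a := 2 * n) (b := 2) (by omega) (by ring)).eq_neg_one_of_two_right

theorem pow_two_mul_mul_geom_sum (hω : IsPrimitiveRoot ω (4 * n)) (hr : r < 2 * n) :
    ω ^ (2 * r) * ∑ i ∈ range n, ((ω ^ (2 * r)) ^ 2) ^ i =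
      if r = 0 then (n : K) else if r = n then -(n : K) else 0 := by
  split_ifs with h0 hrn
  · simp [h0]
  · subst hrn
    simp [hω.pow_two_mul_half_eq_neg_one (by omega)]
  · have hpow : ((ω ^ (2 * r)) ^ 2) ^ n = 1 := by
      rw [← pow_mul, ← pow_mul, show 2 * r * (2 * n) = 4 * n * r by ring, pow_mul,
        hω.pow_eq_one, one_pow]
    rw [geom_sum_eq_zero_of_pow_eq_one hpow fun h => by
      rcases (hω.sq_pow_two_mul_eq_one_iff hr).1 h with h | h <;> contradiction, mul_zero]

end IsPrimitiveRoot

/-- For even `a = 2r` with `0 ≤ r < 2^(m-1)`, the character sum `∑_{t ∈ T_m} ω^(a·t)`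
equals `2^(m-2)` if `r = 0`, `-2^(m-2)` if `r = 2^(m-2)`, and `0` otherwise; in
particular it is rational. -/
theorem stmt_5 (m : ℕ) (hm : 3 ≤ m)
    (ω : ℂ) (hω : ω = Complex.exp (2 * Real.pi * Complex.I / 2 ^ m))
    (r : ℕ) (hr : r < 2 ^ (m - 1)) :
    ∑ t ∈ Tset m, ω ^ ((((2 * r : ℕ) : ZMod (2 ^ m)) * t).val) =
      if r = 0 then (2 : ℂ) ^ (m - 2)
      else if r = 2 ^ (m - 2) then -(2 : ℂ) ^ (m - 2)
      else 0 := by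
  rw [sum_Tset hm]
  obtain ⟨k, rfl⟩ := Nat.exists_eq_add_of_le' hm
  have hprim : IsPrimitiveRoot ω (2 ^ (k + 3)) := by
    rw [hω]
    exact_mod_cast Complex.isPrimitiveRoot_exp (2 ^ (k + 3)) (by positivity)
  have hω1 := hprim.pow_eq_one
  set ζ := ω ^ (2 * r)
  have hterm : ∀ i : ℕ,
      ω ^ ((((2 * r : ℕ) : ZMod (2 ^ (k + 3))) * ((2 * i + 1 : ℕ) : ZMod (2 ^ (k + 3)))).val) +
        ω ^ ((((2 * r : ℕ) : ZMod (2 ^ (k + 3))) * -((2 * i + 1 : ℕ) : ZMod (2 ^ (k + 3)))).val) =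
      ζ ^ (2 * i + 1) + (ζ ^ (2 * i + 1))⁻¹ := by
    intro i
    rw [mul_neg, pow_val_neg_of_pow_eq_one hω1, ← Nat.cast_mul,
      pow_val_natCast_of_pow_eq_one hω1, pow_mul]
  have hζ : ζ ^ (4 * 2 ^ k) = 1 := by
    rw [← pow_mul, show 2 * r * (4 * 2 ^ k) = 2 ^ (k + 3) * r by ring, pow_mul, hω1, one_pow]
  rw [show 2 ^ (k + 3) = 4 * 2 ^ (k + 1) by ring] at hprim
  simp only [Nat.add_sub_cancel, show k + 3 - 1 = k + 2 by omega, show k + 3 - 2 = k + 1 by omega]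
    at hr ⊢
  rw [sum_congr rfl fun i _ => hterm i, sum_odd_pow_add_inv hζ,
    show 2 * 2 ^ k = 2 ^ (k + 1) by ring,
    hprim.pow_two_mul_mul_geom_sum (by rw [pow_succ] at hr; omega)]
  push_cast
  rfl
end

section
/- For every k ≥ 1 there exists an elementary abelian 2-group G = 𝔽₂ⁿ and a connection set S ⊆ G \ {0} closed under inversion and not containing 0 such that the cubelike Cayley graph Cay(G, S) contains a set of 2^k mutually strongly cospectral vertices; specifically, there exist linearly independent p₁,...,p_k ∈ G such that for all w, u ∈ G, ∑_{s∈S}(-1)^{w·s} = ∑_{s∈S}(-1)^{u·s} implies (-1)^{w·p_i} = (-1)^{u·p_i} for all i. -/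
/-- The standard dot product on `𝔽₂ⁿ`. -/
def dot {n : ℕ} (w x : Fin n → ZMod 2) : ZMod 2 := ∑ i, w i * x i

/-!
Split the coordinates into `k` blocks; block `i` carries the graph of the bent function
`(ε, c) ↦ ε ⬝ᵥ c + 1` on `𝔽₂ᵐ × 𝔽₂ᵐ` with `m = 2 (2 i + 1)`, together with an apex coordinate
holding its value. A character whose apex coordinate is `1` sees the Walsh transform of a bent
function, which is `± 2ᵐ`; otherwise character orthogonality leaves `0` or `4ᵐ`. So the
eigenvalue is a sum of digits in `{-1, 0, 1}` times distinct powers of `4`, these digits are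
determined by the eigenvalue, and the `2ᵐ`-digit of block `i` is nonzero exactly when the
character is `-1` on the `i`-th apex vector.
-/

open Finset Function Matrix

namespace Cubelike

def sgn : AddChar (ZMod 2) ℤ where
  toFun x := (-1) ^ x.val
  map_zero_eq_one' := rfl
  map_add_eq_mul' := by decide

lemma sgn_eq_one_iff {x : ZMod 2} : sgn x = 1 ↔ x = 0 := by revert x; decide

lemma abs_sgn (x : ZMod 2) : |sgn x| = 1 := by revert x; decide

lemma zmod_two_eq_zero_or_one (x : ZMod 2) : x = 0 ∨ x = 1 := by revert x; decide

variable {ι : Type*} [Fintype ι]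

def eigenvalue (S : Finset (ι → ZMod 2)) (w : ι → ZMod 2) : ℤ := ∑ s ∈ S, sgn (w ⬝ᵥ s)

lemma sum_sgn_dotProduct [DecidableEq ι] (B : ι → ZMod 2) :
    ∑ c, sgn (B ⬝ᵥ c) = if B = 0 then 2 ^ Fintype.card ι else 0 := by
  let ψ := sgn.compAddMonoidHom (AddMonoidHom.mk' (B ⬝ᵥ ·) (dotProduct_add B))
  have hψ : ψ = 0 ↔ B = 0 := by
    simp [ψ, AddChar.eq_zero_iff, sgn_eq_one_iff, dotProduct_eq_zero_iff]
  classical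
  calc ∑ c, sgn (B ⬝ᵥ c) = ∑ c, ψ c := rfl
    _ = _ := by simp [AddChar.sum_eq_ite, hψ]

lemma sum_sgn_bent [DecidableEq ι] (A B : ι → ZMod 2) :
    ∑ ε, ∑ c, sgn (ε ⬝ᵥ c + A ⬝ᵥ ε + B ⬝ᵥ c) = 2 ^ Fintype.card ι * sgn (A ⬝ᵥ B) := by
  calc _ = ∑ ε, sgn (A ⬝ᵥ ε) * ∑ c, sgn ((ε + B) ⬝ᵥ c) := by
          refine sum_congr rfl fun ε _ => ?_
          rw [mul_sum]
          refine sum_congr rfl fun c _ => ?_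
          rw [add_dotProduct, ← AddChar.map_add_eq_mul]
          ring_nf
    _ = ∑ ε, if ε = B then 2 ^ Fintype.card ι * sgn (A ⬝ᵥ B) else 0 := by
          refine sum_congr rfl fun ε _ => ?_
          simp only [sum_sgn_dotProduct, add_eq_zero_iff_eq_neg, ZModModule.neg_eq_self]
          split_ifs with h
          · rw [h, mul_comm]
          · rw [mul_zero]
    _ = _ := by simp

/-- The `none` coordinate is the apex; `ε ⬝ᵥ c` is complemented there so that no vector is `0`. -/
def gadgetVec (ε c : ι → ZMod 2) : Option (ι ⊕ ι) → ZMod 2 :=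
  fun x => x.elim (ε ⬝ᵥ c + 1) (Sum.elim ε c)

lemma gadgetVec_injective : Injective (uncurry (gadgetVec (ι := ι))) := by
  rintro ⟨ε, c⟩ ⟨ε', c'⟩ h
  ext s
  · exact congrFun h (some (.inl s))
  · exact congrFun h (some (.inr s))

lemma gadgetVec_ne_zero (ε c : ι → ZMod 2) : gadgetVec ε c ≠ 0 := by
  intro h
  have hε : ε = 0 := funext fun s => congrFun h (some (.inl s))
  have hc : c = 0 := funext fun s => congrFun h (some (.inr s))
  simpa [gadgetVec, hε, hc] using congrFun h none

lemma dotProduct_gadgetVec (v : Option (ι ⊕ ι) → ZMod 2) (ε c : ι → ZMod 2) :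
    v ⬝ᵥ gadgetVec ε c =
      v none * (ε ⬝ᵥ c + 1) + (v ∘ some ∘ .inl) ⬝ᵥ ε + (v ∘ some ∘ .inr) ⬝ᵥ c := by
  simp [dotProduct, Fintype.sum_option, Fintype.sum_sum_type, gadgetVec, add_assoc]

variable (ι) in
def gadget [DecidableEq ι] : Finset (Option (ι ⊕ ι) → ZMod 2) := univ.image (uncurry gadgetVec)

lemma zero_notMem_gadget [DecidableEq ι] : 0 ∉ gadget ι := by
  simpa [gadget] using fun ε c => gadgetVec_ne_zero ε c

def lowDigit (v : Option (ι ⊕ ι) → ZMod 2) : ℤ :=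
  if v none = 1 then -sgn ((v ∘ some ∘ .inl) ⬝ᵥ (v ∘ some ∘ .inr)) else 0

def highDigit (v : Option (ι ⊕ ι) → ZMod 2) : ℤ :=
  if v none = 0 ∧ v ∘ some ∘ .inl = 0 ∧ v ∘ some ∘ .inr = 0 then 1 else 0

lemma eigenvalue_gadget [DecidableEq ι] (v : Option (ι ⊕ ι) → ZMod 2) :
    eigenvalue (gadget ι) v =
      2 ^ Fintype.card ι * lowDigit v + 4 ^ Fintype.card ι * highDigit v := by
  rw [eigenvalue, gadget, sum_image gadgetVec_injective.injOn, Fintype.sum_prod_type]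
  simp only [uncurry_apply_pair, dotProduct_gadgetVec]
  rcases zmod_two_eq_zero_or_one (v none) with h | h
  · simp only [lowDigit, highDigit, h, zero_mul, zero_add, AddChar.map_add_eq_mul, ← mul_sum,
      ← sum_mul, sum_sgn_dotProduct]
    split_ifs <;> simp_all [← mul_pow]
  · have hflip (x y z : ZMod 2) : sgn (1 * (x + 1) + y + z) = -sgn (x + y + z) := by
      revert x y z; decide
    simp only [lowDigit, highDigit, h, hflip, sum_neg_distrib, sum_sgn_bent]
    simp

lemma abs_lowDigit_le (v : Option (ι ⊕ ι) → ZMod 2) : |lowDigit v| ≤ 1 := by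
  unfold lowDigit
  split_ifs <;> simp [abs_sgn]

lemma abs_highDigit_le (v : Option (ι ⊕ ι) → ZMod 2) : |highDigit v| ≤ 1 := by
  unfold highDigit
  split_ifs <;> simp

lemma lowDigit_ne_zero_iff (v : Option (ι ⊕ ι) → ZMod 2) : lowDigit v ≠ 0 ↔ v none = 1 := by
  have := abs_sgn ((v ∘ some ∘ .inl) ⬝ᵥ (v ∘ some ∘ .inr))
  unfold lowDigit
  split_ifs with h <;> simp_all [← abs_ne_zero]

lemma apex_eq_of_lowDigit_eq {v v' : Option (ι ⊕ ι) → ZMod 2} (h : lowDigit v = lowDigit v') :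
    v none = v' none := by
  have := (lowDigit_ne_zero_iff v).symm.trans (h ▸ lowDigit_ne_zero_iff v')
  rcases zmod_two_eq_zero_or_one (v none) with h₁ | h₁ <;>
    rcases zmod_two_eq_zero_or_one (v' none) with h₂ | h₂ <;> simp_all

section Blocks

variable {κ : Type*} [DecidableEq κ] {β : κ → Type*}

def blockEmbed (i : κ) (x : β i → ZMod 2) : (Σ i, β i) → ZMod 2 :=
  fun p => Pi.single (M := fun j => β j → ZMod 2) i x p.1 p.2

lemma blockEmbed_apply_same (i : κ) (x : β i → ZMod 2) (a : β i) :
    blockEmbed i x ⟨i, a⟩ = x a := by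
  simp [blockEmbed]

lemma blockEmbed_apply_of_ne {i j : κ} (hij : j ≠ i) (x : β i → ZMod 2) (a : β j) :
    blockEmbed i x ⟨j, a⟩ = 0 := by
  simp [blockEmbed, Pi.single_eq_of_ne hij]

lemma blockEmbed_injective (i : κ) : Injective (blockEmbed (β := β) i) := fun x y h =>
  funext fun a => by simpa [blockEmbed_apply_same] using congrFun h ⟨i, a⟩

lemma eq_zero_of_blockEmbed_eq {i j : κ} (hij : i ≠ j) {x : β i → ZMod 2} {y : β j → ZMod 2}
    (h : blockEmbed i x = blockEmbed j y) : x = 0 :=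
  funext fun a => by
    simpa [blockEmbed_apply_same, blockEmbed_apply_of_ne hij] using congrFun h ⟨i, a⟩

variable [Fintype κ] [∀ i, Fintype (β i)]

lemma dotProduct_blockEmbed (w : (Σ i, β i) → ZMod 2) (i : κ) (x : β i → ZMod 2) :
    w ⬝ᵥ blockEmbed i x = (fun a => w ⟨i, a⟩) ⬝ᵥ x := by
  rw [dotProduct, Fintype.sum_sigma, sum_eq_single i]
  · simp [blockEmbed_apply_same, dotProduct]
  · intro j _ hj
    simp [blockEmbed_apply_of_ne hj]
  · simp

def blockUnion (S : ∀ i, Finset (β i → ZMod 2)) : Finset ((Σ i, β i) → ZMod 2) :=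
  univ.biUnion fun i => (S i).map ⟨blockEmbed i, blockEmbed_injective i⟩

variable {S : ∀ i, Finset (β i → ZMod 2)}

lemma zero_notMem_blockUnion (hS : ∀ i, 0 ∉ S i) : 0 ∉ blockUnion S := by
  simp only [blockUnion, mem_biUnion, mem_map, not_exists, not_and]
  rintro i - x hx h
  have hx0 : x = 0 := funext fun a => by simpa [blockEmbed_apply_same] using congrFun h ⟨i, a⟩
  exact hS i (hx0 ▸ hx)

lemma eigenvalue_blockUnion (hS : ∀ i, 0 ∉ S i) (w : (Σ i, β i) → ZMod 2) :
    eigenvalue (blockUnion S) w = ∑ i, eigenvalue (S i) (fun a => w ⟨i, a⟩) := by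
  rw [eigenvalue, blockUnion, sum_biUnion]
  · simp [dotProduct_blockEmbed, eigenvalue]
  · intro i _ j _ hij
    simp only [onFun, disjoint_left, mem_map]
    rintro _ ⟨x, hx, rfl⟩ ⟨y, -, h⟩
    exact hS i (eq_zero_of_blockEmbed_eq hij h.symm ▸ hx)

end Blocks

theorem eq_zero_of_sum_pow_mul_eq_zero {κ : Type*} [Fintype κ] {b : ℤ} {f : κ → ℕ}
    (hf : Injective f) {c : κ → ℤ} (hc : ∀ j, |c j| < b) (h : ∑ j, b ^ f j * c j = 0) (j : κ) :
    c j = 0 := by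
  classical
  by_contra hj
  obtain ⟨i, hi, hmin⟩ := (univ.filter (c · ≠ 0)).exists_min_image f ⟨j, by simpa using hj⟩
  simp only [mem_filter, mem_univ, true_and] at hi hmin
  have hb : b ≠ 0 := ((abs_nonneg _).trans_lt (hc i)).ne'
  have hrest : b ^ (f i + 1) ∣ ∑ j ∈ univ.erase i, b ^ f j * c j := dvd_sum fun j hj => by
    by_cases hcj : c j = 0
    · simp [hcj]
    exact (pow_dvd_pow b ((hmin j hcj).lt_of_ne (hf.ne (ne_of_mem_erase hj).symm))).mul_right _
  rw [← add_sum_erase _ _ (mem_univ i), add_eq_zero_iff_eq_neg] at h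
  have hdvd : b ^ f i * b ∣ b ^ f i * c i := by
    rw [h, dvd_neg, ← pow_succ]
    exact hrest
  exact hi (Int.eq_zero_of_abs_lt_dvd ((mul_dvd_mul_iff_left (pow_ne_zero _ hb)).1 hdvd) (hc i))

/-- `2 ^ blockDim i = 4 ^ (2 i + 1)` and `4 ^ blockDim i` are powers of `4` whose exponents, odd
and twice odd, are all distinct. -/
def blockDim (i : ℕ) : ℕ := 2 * (2 * i + 1)

abbrev Coord (k : ℕ) := Σ i : Fin k, Option (Fin (blockDim i) ⊕ Fin (blockDim i))

def connectionSet (k : ℕ) : Finset (Coord k → ZMod 2) := blockUnion fun _ => gadget _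

def digitExponent (k : ℕ) : Fin k ⊕ Fin k → ℕ :=
  Sum.elim (fun i => 2 * i + 1) (fun i => blockDim i)

def digits {k : ℕ} (w : Coord k → ZMod 2) : Fin k ⊕ Fin k → ℤ :=
  Sum.elim (fun i => lowDigit fun a => w ⟨i, a⟩) (fun i => highDigit fun a => w ⟨i, a⟩)

lemma digitExponent_injective (k : ℕ) : Injective (digitExponent k) := by
  rintro (i | i) (j | j) h <;> simp [digitExponent, blockDim, Fin.ext_iff] at h ⊢ <;> omega

lemma abs_digits_le {k : ℕ} (w : Coord k → ZMod 2) (j : Fin k ⊕ Fin k) : |digits w j| ≤ 1 := by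
  rcases j with i | i
  exacts [abs_lowDigit_le fun a => w ⟨i, a⟩, abs_highDigit_le fun a => w ⟨i, a⟩]

lemma two_pow_blockDim (i : ℕ) : (2 : ℤ) ^ blockDim i = 4 ^ (2 * i + 1) := by
  rw [blockDim, pow_mul]
  norm_num

lemma zero_notMem_connectionSet (k : ℕ) : 0 ∉ connectionSet k :=
  zero_notMem_blockUnion fun _ => zero_notMem_gadget

lemma eigenvalue_connectionSet {k : ℕ} (w : Coord k → ZMod 2) :
    eigenvalue (connectionSet k) w = ∑ j, 4 ^ digitExponent k j * digits w j := by
  rw [connectionSet, eigenvalue_blockUnion (fun _ => zero_notMem_gadget), Fintype.sum_sum_type,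
    ← sum_add_distrib]
  refine sum_congr rfl fun i _ => ?_
  rw [eigenvalue_gadget, Fintype.card_fin, two_pow_blockDim]
  rfl

lemma apex_eq_of_eigenvalue_connectionSet_eq {k : ℕ} {w u : Coord k → ZMod 2}
    (h : eigenvalue (connectionSet k) w = eigenvalue (connectionSet k) u) (i : Fin k) :
    w ⟨i, none⟩ = u ⟨i, none⟩ := by
  have hdiff : ∀ j, |(digits w - digits u) j| < 4 := fun j => by
    rw [Pi.sub_apply]
    linarith [abs_sub (digits w j) (digits u j), abs_digits_le w j, abs_digits_le u j]
  have hsum : ∑ j, 4 ^ digitExponent k j * (digits w - digits u) j = 0 := by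
    simp only [Pi.sub_apply, mul_sub, sum_sub_distrib, ← eigenvalue_connectionSet, h, sub_self]
  have hlow := eq_zero_of_sum_pow_mul_eq_zero (digitExponent_injective k) hdiff hsum (.inl i)
  rw [Pi.sub_apply, sub_eq_zero] at hlow
  exact apex_eq_of_lowDigit_eq (v := fun a => w ⟨i, a⟩) (v' := fun a => u ⟨i, a⟩) hlow

lemma eigenvalue_map_arrowCongr {ι κ : Type*} [Fintype ι] [Fintype κ] (e : ι ≃ κ)
    (S : Finset (ι → ZMod 2)) (w : κ → ZMod 2) :
    eigenvalue (S.map (e.arrowCongr (.refl (ZMod 2))).toEmbedding) w = eigenvalue S (w ∘ e) := by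
  rw [eigenvalue, eigenvalue, sum_map]
  exact sum_congr rfl fun s _ => congrArg sgn (dotProduct_comp_equiv_symm w s e)

end Cubelike

open Cubelike in
theorem stmt_19_general (k : ℕ) :
    ∃ (n : ℕ) (S : Finset (Fin n → ZMod 2)),
      (0 : Fin n → ZMod 2) ∉ S ∧ (∀ s ∈ S, -s ∈ S) ∧
      ∃ p : Fin k → (Fin n → ZMod 2), LinearIndependent (ZMod 2) p ∧
        ∀ w u : Fin n → ZMod 2,
          (∑ s ∈ S, (-1 : ℤ) ^ (dot w s).val) = (∑ s ∈ S, (-1 : ℤ) ^ (dot u s).val) →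
          ∀ i, (-1 : ℤ) ^ (dot w (p i)).val = (-1 : ℤ) ^ (dot u (p i)).val := by
  obtain ⟨n, ⟨e⟩⟩ : ∃ n, Nonempty (Coord k ≃ Fin n) := ⟨_, ⟨Fintype.equivFin _⟩⟩
  let apex (i : Fin k) : Fin n := e ⟨i, none⟩
  refine ⟨n, (connectionSet k).map (e.arrowCongr (.refl _)).toEmbedding, ?_,
    fun s hs => by rwa [ZModModule.neg_eq_self], fun i => Pi.single (apex i) (1 : ZMod 2), ?_,
    fun w u h i => ?_⟩
  · rw [mem_map_equiv]
    exact zero_notMem_connectionSet k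
  · have hapex : Injective apex := e.injective.comp fun i j h => congrArg Sigma.fst h
    simpa [comp_def] using (Pi.basisFun (ZMod 2) (Fin n)).linearIndependent.comp apex hapex
  · change eigenvalue _ w = eigenvalue _ u at h
    rw [eigenvalue_map_arrowCongr, eigenvalue_map_arrowCongr] at h
    have hdot (v : Fin n → ZMod 2) : dot v (Pi.single (apex i) (1 : ZMod 2)) = v (apex i) :=
      (dotProduct_single v 1 (apex i)).trans (mul_one _)
    rw [hdot, hdot]
    exact congrArg (fun x : ZMod 2 => (-1 : ℤ) ^ x.val)
      (apex_eq_of_eigenvalue_connectionSet_eq h i)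

/-- For every `k ≥ 1` there is a cubelike Cayley graph `Cay(𝔽₂ⁿ, S)` containing `2^k`
mutually strongly cospectral vertices: there exist linearly independent `p₁, …, p_k`
such that any two characters giving the same eigenvalue agree on every `p_i` (hence
on the subgroup of order `2^k` they generate). -/
theorem stmt_19 (k : ℕ) (hk : 1 ≤ k) :
    ∃ (n : ℕ) (S : Finset (Fin n → ZMod 2)),
      (0 : Fin n → ZMod 2) ∉ S ∧ (∀ s ∈ S, -s ∈ S) ∧
      ∃ p : Fin k → (Fin n → ZMod 2), LinearIndependent (ZMod 2) p ∧
        ∀ w u : Fin n → ZMod 2,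
          (∑ s ∈ S, (-1 : ℤ) ^ (dot w s).val) = (∑ s ∈ S, (-1 : ℤ) ^ (dot u s).val) →
          ∀ i, (-1 : ℤ) ^ (dot w (p i)).val = (-1 : ℤ) ^ (dot u (p i)).val :=
  stmt_19_general k
end
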